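/- Unseen enqueues do not precede seen ones in the TS queue (Lemma 3): given a configuration κ = (s, (E,R), G_ts) satisfying the invariant (in particular INV_ALG(i) and INV_WF(iv) below, with R transitive and uncompleted events R-maximal) and an identifier d of a dequeue event whose generated timestamp satisfies s(start_ts) <_TS ⊤, the following holds: for all i ∈ InQ(s,E,G_ts) \ seen(κ, d) and all i' ∈ seen(κ, d), if the threads of both i and i' belong to A, then ¬(i R i'). -/
import Mathlib


/-- Operations of the TS queue. -/
inductive QOp where
  | enq
  | deq
deriving DecidableEq

/-- A configuration of the TS queue: the per-thread pools, the current
thread's local variables (`start_ts`, `cand_pid`, `cand_tid`, `cand_ts`, and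
the set `A` of visited threads), an abstract history `(E, R)` (event
identifiers with their threads, operations and completion status, and the
real-time order), and the ghost timestamp map `G_ts`. -/
structure TSConfig (ThreadID EventID TS PoolID Val : Type) where
  pools : ThreadID → List (PoolID × Val × TS)
  startTs : TS
  candPid : Option PoolID
  candTid : ThreadID
  candTs : TS
  visited : Set ThreadID
  ids : Set EventID
  tid : EventID → ThreadID
  op : EventID → QOp
  completed : EventID → Prop
  rt : EventID → EventID → Prop
  Gts : EventID → Option TS

variable {ThreadID EventID TS PoolID Val : Type}

/-- `InQ(s, E, G_ts)`: the enqueue events whose values are currently in the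
pools (`e = enqOf(E, G_ts, t, τ)` for a timestamp `τ` occurring in `t`'s pool). -/
def inQ (κ : TSConfig ThreadID EventID TS PoolID Val) : Set EventID :=
  { e | e ∈ κ.ids ∧ κ.op e = QOp.enq ∧
        ∃ τ, κ.Gts e = some τ ∧ ∃ p v, (p, v, τ) ∈ κ.pools (κ.tid e) }

/-- `seen(κ, d)`: the enqueue events with values in the pools that the
dequeue `d` has seen — completed, in `InQ`, ordered before `d`, with
timestamp not greater than `start_ts`, and belonging to a visited thread. -/
def seen (lt : TS → TS → Prop) (κ : TSConfig ThreadID EventID TS PoolID Val)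
    (d : EventID) : Set EventID :=
  { e | e ∈ inQ κ ∧ κ.completed e ∧ κ.rt e d ∧
        (∃ τ, κ.Gts e = some τ ∧ ¬ lt κ.startTs τ) ∧ κ.tid e ∈ κ.visited }

/-- **Unseen enqueues do not precede seen ones in the TS queue (Lemma 3 /
Lemma A.3 of the paper).** Given a configuration satisfying the invariant
(in particular `INV_ALG(i)` and `INV_WF(iv)`, with `R` transitive and
uncompleted events `R`-maximal) and a dequeue event `d` whose generated
timestamp satisfies `start_ts <_TS ⊤`: an enqueue by a visited thread whose
value is in the pools but that is not seen by `d` does not precede any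
enqueue seen by `d`. -/
theorem ts_queue_unseen_not_before_seen
    {ThreadID EventID TS PoolID Val : Type}
    (lt : TS → TS → Prop) (top : TS)
    (hlt_irrefl : ∀ τ, ¬ lt τ τ)
    (hlt_trans : ∀ τ1 τ2 τ3, lt τ1 τ2 → lt τ2 τ3 → lt τ1 τ3)
    (htop : ∀ τ, τ ≠ top → lt τ top)
    (κ : TSConfig ThreadID EventID TS PoolID Val)
    -- history well-formedness: R transitive, irreflexive, uncompleted maximal
    (hrt_trans : ∀ a b c, κ.rt a b → κ.rt b c → κ.rt a c)
    (hrt_irrefl : ∀ a, ¬ κ.rt a a)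
    (hmax : ∀ i ∈ κ.ids, ¬ κ.completed i → ∀ j, ¬ κ.rt i j)
    -- INV_ALG(i): enqueues of values in the pools are ordered only if so are
    -- their timestamps
    (hALGi : ∀ e ∈ inQ κ, ∀ e' ∈ inQ κ, κ.rt e e' →
        ∃ τ τ', κ.Gts e = some τ ∧ κ.Gts e' = some τ' ∧ lt τ τ')
    -- INV_WF(iii): G_ts is injective on the events of each thread
    (hWFiii : ∀ e e', e ∈ κ.ids → e' ∈ κ.ids → e ≠ e' → κ.tid e = κ.tid e' →
        ∀ τ, κ.Gts e = some τ → κ.Gts e' ≠ some τ)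
    -- INV_WF(iv): an enqueue event is uncompleted iff its timestamp is
    -- undefined or ⊤
    (hWFiv : ∀ e ∈ κ.ids, κ.op e = QOp.enq →
        (¬ κ.completed e ↔ (κ.Gts e = none ∨ κ.Gts e = some top)))
    -- the dequeue event d, whose generated timestamp is non-maximal
    (d : EventID) (hd : d ∈ κ.ids ∧ κ.op d = QOp.deq)
    (hstart : lt κ.startTs top) :
    ∀ i, i ∈ inQ κ → i ∉ seen lt κ d →
      ∀ i' ∈ seen lt κ d,
        κ.tid i ∈ κ.visited → κ.tid i' ∈ κ.visited → ¬ κ.rt i i' := by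
  intro i hiQ hins i' hi' hvi hvi' hrii'
  obtain ⟨hi'Q, hi'c, hi'd, ⟨τ', hτ', hnlt⟩, _⟩ := hi'
  obtain ⟨τ, τ2, hτ, hτ2, hltττ'⟩ := hALGi i hiQ i' hi'Q hrii'
  rw [hτ'] at hτ2
  injection hτ2 with hτ2; subst hτ2
  -- i is completed, since it has a successor in rt
  have hic : κ.completed i := by
    by_contra hnc
    exact hmax i hiQ.1 hnc i' hrii'
  have hrid : κ.rt i d := hrt_trans i i' d hrii' hi'd
  apply hins
  exact ⟨hiQ, hic, hrid, ⟨τ, hτ, fun h => hnlt (hlt_trans _ _ _ h hltττ')⟩, hvi⟩
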